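/- arXiv:2504.03406 — 5 statements merged into one kernel-verified Lean document; each statement's English description precedes it below -/
import Mathlib

section
/- Let N ∈ ℝ^{m×m} be symmetric positive semidefinite with strictly positive diagonal entries. Define M ∈ ℝ^{m×m} by M(i,j) = -N(i,j)² / (N(i,i)·N(j,j)) for i ≠ j and M(i,i) = 0. Then M ⪯ I. -/
/-!
With `Λ = diagonal (N i i)`, the matrix `1 - M` equals `Λ⁻¹ (N ⊙ N) Λ⁻¹`: off the diagonal both
sides are `N i j ^ 2 / (N i i * N j j)`, and on the diagonal both are `1`. By the Schur product
theorem `N ⊙ N` is positive semidefinite, and congruence by the symmetric matrix `Λ⁻¹` preserves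
this.
-/

open Matrix

namespace Matrix

variable {n : Type*} [Fintype n] [DecidableEq n]

theorem PosSemidef.diagonal_mul_hadamard_self_mul_diagonal {N : Matrix n n ℝ} (hN : N.PosSemidef)
    (d : n → ℝ) : (diagonal d * (N ⊙ N) * diagonal d).PosSemidef := by
  simpa using (hN.hadamard hN).conjTranspose_mul_mul_same (diagonal d)

theorem one_sub_of_eq_diagonal_inv_mul_hadamard_self_mul {N : Matrix n n ℝ}
    (hdiag : ∀ i, N i i ≠ 0) :
    1 - of (fun i j => if i = j then 0 else -(N i j) ^ 2 / (N i i * N j j)) =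
      diagonal (fun i => (N i i)⁻¹) * (N ⊙ N) * diagonal (fun i => (N i i)⁻¹) := by
  ext i j
  rw [mul_diagonal, diagonal_mul, hadamard_apply]
  by_cases hij : i = j
  · subst hij
    simp [field, hdiag i]
  · simp only [sub_apply, one_apply_ne hij, of_apply, hij, ↓reduceIte, zero_sub]
    field_simp

end Matrix

/-- For a symmetric PSD matrix `N` with strictly positive diagonal, the matrix
`M` with `M i j = -N(i,j)²/(N(i,i)·N(j,j))` off the diagonal and zero diagonal
satisfies `M ⪯ I`. -/
theorem stmt6 {m : ℕ} (N : Matrix (Fin m) (Fin m) ℝ) (hN : N.PosSemidef)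
    (hdiag : ∀ i, 0 < N i i) :
    ((1 : Matrix (Fin m) (Fin m) ℝ) -
      Matrix.of (fun i j => if i = j then 0 else -(N i j) ^ 2 / (N i i * N j j))).PosSemidef := by
  rw [one_sub_of_eq_diagonal_inv_mul_hadamard_self_mul fun i => (hdiag i).ne']
  exact hN.diagonal_mul_hadamard_self_mul_diagonal _
end

section
/- Let X ⊆ {0,1}^n be a nonempty downward closed family, μ fully supported on X, and let φ : ℕ → ℝ≥0 be log-concave (φ(k)² ≥ φ(k-1)φ(k+1)) with no internal zeros and φ(0) > 0. Define ν(S) ∝ φ(|S|)μ(S) on X. Then for every non-maximal S ∈ X with |S| = k and both pairwise dependency matrices defined, M_S(ν) = c·(M_S(μ) + J - I) - (J - I) where c = φ(k+2)φ(k)/φ(k+1)² ∈ [0,1] and J is the all-ones matrix on V_S; consequently M_S(μ) ⪯ I implies M_S(ν) ⪯ I. -/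
/-- The pairwise dependency matrix entry of an (unnormalized) weight `μ` at a
conditioning set `S`. -/
noncomputable def depMatrix {n : ℕ} (μ : Finset (Fin n) → ℝ) (S : Finset (Fin n))
    (i j : Fin n) : ℝ :=
  if i = j then 0
  else μ (insert i (insert j S)) * μ S / (μ (insert i S) * μ (insert j S)) - 1

-- Off the diagonal, wherever `x / 0 = 0` kicks in both sides are `-1`.
theorem depMatrix_card_reweight {n : ℕ} (φ : ℕ → ℝ) (μ : Finset (Fin n) → ℝ)
    {S : Finset (Fin n)} {i j : Fin n} (hi : i ∉ S) (hj : j ∉ S) :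
    depMatrix (fun T => φ T.card * μ T) S i j =
      φ (S.card + 2) * φ S.card / φ (S.card + 1) ^ 2 *
          (depMatrix μ S i j + 1 - if i = j then 1 else 0) - (1 - if i = j then 1 else 0) := by
  by_cases hij : i = j
  · simp [depMatrix, hij]
  · have hij' : i ∉ insert j S := by simp [hij, hi]
    simp only [depMatrix, if_neg hij, Finset.card_insert_of_notMem hi,
      Finset.card_insert_of_notMem hj, Finset.card_insert_of_notMem hij']
    ring

theorem Matrix.posSemidef_of_const_one {m : Type*} [Fintype m] :
    (Matrix.of fun _ _ : m => (1 : ℝ)).PosSemidef := by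
  simpa [Matrix.vecMulVec] using Matrix.posSemidef_vecMulVec_self_star (1 : m → ℝ)

theorem Matrix.PosSemidef.one_sub_of_eq_affine_ones {m : Type*} [Fintype m] [DecidableEq m]
    {A B : Matrix m m ℝ} {c : ℝ} (hc0 : 0 ≤ c) (hc1 : c ≤ 1)
    (hB : B = c • (A + Matrix.of (fun _ _ => 1) - 1) - (Matrix.of (fun _ _ => 1) - 1))
    (hA : (1 - A).PosSemidef) : (1 - B).PosSemidef := by
  have hsplit : 1 - B = c • (1 - A) + (1 - c) • Matrix.of (fun _ _ => (1 : ℝ)) := by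
    rw [hB]; module
  rw [hsplit]
  exact (hA.smul hc0).add (Matrix.posSemidef_of_const_one.smul (sub_nonneg.mpr hc1))

theorem stmt13_general {n : ℕ} (X : Finset (Finset (Fin n)))
    (μ : Finset (Fin n) → ℝ)
    (φ : ℕ → ℝ) (hφnonneg : ∀ m, 0 ≤ φ m)
    (hφlc : ∀ m : ℕ, 1 ≤ m → φ (m - 1) * φ (m + 1) ≤ φ m ^ 2)
    (S : Finset (Fin n))
    (k : ℕ) (hk : S.card = k)
    (c : ℝ) (hc : c = φ (k + 2) * φ k / φ (k + 1) ^ 2) :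
    0 ≤ c ∧ c ≤ 1 ∧
    (∀ i j : {a : Fin n // a ∉ S ∧ insert a S ∈ X},
      depMatrix (fun T => φ T.card * μ T) S i.1 j.1 =
        c * (depMatrix μ S i.1 j.1 + 1 - (if i = j then 1 else 0))
          - (1 - (if i = j then 1 else 0))) ∧
    (((1 : Matrix {a : Fin n // a ∉ S ∧ insert a S ∈ X} {a : Fin n // a ∉ S ∧ insert a S ∈ X} ℝ)
        - Matrix.of (fun (i j : {a : Fin n // a ∉ S ∧ insert a S ∈ X}) => depMatrix μ S i.1 j.1)).PosSemidef →
      ((1 : Matrix {a : Fin n // a ∉ S ∧ insert a S ∈ X} {a : Fin n // a ∉ S ∧ insert a S ∈ X} ℝ)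
        - Matrix.of (fun (i j : {a : Fin n // a ∉ S ∧ insert a S ∈ X}) => depMatrix (fun T => φ T.card * μ T) S i.1 j.1)).PosSemidef) := by
  subst hk hc
  have hc0 : 0 ≤ φ (S.card + 2) * φ S.card / φ (S.card + 1) ^ 2 :=
    div_nonneg (mul_nonneg (hφnonneg _) (hφnonneg _)) (sq_nonneg _)
  have hc1 : φ (S.card + 2) * φ S.card / φ (S.card + 1) ^ 2 ≤ 1 :=
    div_le_one_of_le₀ (by simpa [mul_comm] using hφlc (S.card + 1) (by omega)) (sq_nonneg _)
  have hentry : ∀ i j : {a : Fin n // a ∉ S ∧ insert a S ∈ X},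
      depMatrix (fun T => φ T.card * μ T) S i.1 j.1 =
        φ (S.card + 2) * φ S.card / φ (S.card + 1) ^ 2 *
          (depMatrix μ S i.1 j.1 + 1 - (if i = j then 1 else 0)) - (1 - (if i = j then 1 else 0)) := by
    intro i j
    simpa only [Subtype.ext_iff] using depMatrix_card_reweight φ μ i.2.1 j.2.1
  refine ⟨hc0, hc1, hentry, Matrix.PosSemidef.one_sub_of_eq_affine_ones hc0 hc1 ?_⟩
  ext i j
  simp [hentry, Matrix.one_apply]

/-- Reweighting a distribution on a downward closed family by a log-concave function of
the size: `ν(T) ∝ φ(|T|)·μ(T)`.  For a non-maximal `S` with `|S| = k`, one has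
`M_S(ν) = c·(M_S(μ) + J - I) - (J - I)` with `c = φ(k+2)φ(k)/φ(k+1)² ∈ [0,1]`; hence
`M_S(μ) ⪯ I` implies `M_S(ν) ⪯ I`. -/
theorem stmt13 {n : ℕ} (X : Finset (Finset (Fin n))) (hX : X.Nonempty)
    (hdc : ∀ S T : Finset (Fin n), T ∈ X → S ⊆ T → S ∈ X)
    (μ : Finset (Fin n) → ℝ)
    (hsupp : ∀ S, 0 < μ S ↔ S ∈ X) (hzero : ∀ S, S ∉ X → μ S = 0)
    (φ : ℕ → ℝ) (hφnonneg : ∀ m, 0 ≤ φ m)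
    (hφlc : ∀ m : ℕ, 1 ≤ m → φ (m - 1) * φ (m + 1) ≤ φ m ^ 2)
    (hφniz : ∀ m₁ m₂ m : ℕ, m₁ ≤ m → m ≤ m₂ → 0 < φ m₁ → 0 < φ m₂ → 0 < φ m)
    (hφ0 : 0 < φ 0)
    (S : Finset (Fin n)) (hS : S ∈ X) (hnonmax : ∃ i ∉ S, insert i S ∈ X)
    (k : ℕ) (hk : S.card = k)
    (c : ℝ) (hc : c = φ (k + 2) * φ k / φ (k + 1) ^ 2) :
    0 ≤ c ∧ c ≤ 1 ∧
    (∀ i j : {a : Fin n // a ∉ S ∧ insert a S ∈ X},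
      depMatrix (fun T => φ T.card * μ T) S i.1 j.1 =
        c * (depMatrix μ S i.1 j.1 + 1 - (if i = j then 1 else 0))
          - (1 - (if i = j then 1 else 0))) ∧
    (((1 : Matrix {a : Fin n // a ∉ S ∧ insert a S ∈ X} {a : Fin n // a ∉ S ∧ insert a S ∈ X} ℝ)
        - Matrix.of (fun (i j : {a : Fin n // a ∉ S ∧ insert a S ∈ X}) => depMatrix μ S i.1 j.1)).PosSemidef →
      ((1 : Matrix {a : Fin n // a ∉ S ∧ insert a S ∈ X} {a : Fin n // a ∉ S ∧ insert a S ∈ X} ℝ)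
        - Matrix.of (fun (i j : {a : Fin n // a ∉ S ∧ insert a S ∈ X}) => depMatrix (fun T => φ T.card * μ T) S i.1 j.1)).PosSemidef) :=
  stmt13_general X μ φ hφnonneg hφlc S k hk c hc
end

section
/- Let μ be a distribution on {0,1}^n with generating polynomial g_μ(z) = Σ_S μ(S)∏_{i∈S} z_i. For z ∈ ℝⁿ_{>0}, let z*μ denote the tilted distribution (z*μ)(S) ∝ μ(S)∏_{i∈S} z_i. Then the Hessian of log g_μ at z satisfies ∇² log g_μ(z) = diag(z)^{-1} (Cov(z*μ) - diag(m(z*μ))) diag(z)^{-1}. In particular, log g_μ is concave at z iff Cov(z*μ) ⪯ diag(m(z*μ)). -/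
/-!
Each monomial `∏ i ∈ S, z i` is affine in every variable, so with `w S = μ S * ∏ i ∈ S, z i`,
`z b * ∂_b g = ∑_{S ∋ b} w S` and
`z a * z b * ∂_a ∂_b g = ∑_{S ∋ a, b} w S - [a = b] ∑_{S ∋ a} w S`.
Dividing by `g z = ∑ w` turns these into the first and second moments of the tilted distribution,
and `∂_a ∂_b log g = ∂_a ∂_b g / g - ∂_a g ∂_b g / g²` gives the formula. The Hessian is thus the
congruence of `Cov - diag m` by the invertible `diag(z)⁻¹`, which preserves semidefiniteness.
-/

open Real Topology ContinuousLinearMap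

theorem fderiv_fderiv_log_apply {E : Type*} [NormedAddCommGroup E] [NormedSpace ℝ E]
    {f : E → ℝ} {z : E} (hf : ContDiffAt ℝ 2 f z) (hz : f z ≠ 0) (v w : E) :
    fderiv ℝ (fun y => fderiv ℝ (fun x => log (f x)) y v) z w =
      fderiv ℝ (fun y => fderiv ℝ f y v) z w / f z
        - fderiv ℝ f z w * fderiv ℝ f z v / f z ^ 2 := by
  have hf_near : ∀ᶠ y in 𝓝 z, DifferentiableAt ℝ f y ∧ f y ≠ 0 :=
    (hf.eventually (by simp)).and (hf.continuousAt.eventually_ne hz) |>.mono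
      fun y hy => ⟨hy.1.differentiableAt (by simp), hy.2⟩
  have hlog : (fun y => fderiv ℝ (fun x => log (f x)) y v) =ᶠ[𝓝 z]
      fun y => (f y)⁻¹ * fderiv ℝ f y v := hf_near.mono fun y hy => by
    simp [(hy.1.hasFDerivAt.log hy.2).fderiv]
  have hf' : HasFDerivAt (fun y => fderiv ℝ f y v) (fderiv ℝ (fun y => fderiv ℝ f y v) z) z :=
    ((hf.fderiv_right (m := 1) le_rfl).differentiableAt one_ne_zero |>.clm_apply
      (differentiableAt_const v)).hasFDerivAt
  have hinv : HasFDerivAt (fun y => (f y)⁻¹) ((-(f z ^ 2)⁻¹) • fderiv ℝ f z) z :=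
    (hasDerivAt_inv hz).comp_hasFDerivAt z (hf.differentiableAt (by simp)).hasFDerivAt
  rw [hlog.fderiv_eq, (hinv.fun_mul hf').fderiv]
  simp only [neg_smul, smul_neg, add_apply, smul_apply, smul_eq_mul, neg_apply]
  field_simp
  ring

variable {ι : Type*} [Fintype ι]

def genPoly (μ : Finset ι → ℝ) (z : ι → ℝ) : ℝ := ∑ S, μ S * ∏ i ∈ S, z i

theorem genPoly_pos {μ : Finset ι → ℝ} (hμ : ∀ S, 0 ≤ μ S) (hμ0 : ∑ S, μ S ≠ 0)
    {z : ι → ℝ} (hz : ∀ i, 0 < z i) : 0 < genPoly μ z := by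
  obtain ⟨S, -, hS⟩ := Finset.exists_ne_zero_of_sum_ne_zero hμ0
  exact Finset.sum_pos' (fun S _ => mul_nonneg (hμ S) (Finset.prod_pos fun i _ => hz i).le)
    ⟨S, Finset.mem_univ S, mul_pos ((hμ S).lt_of_ne' hS) (Finset.prod_pos fun i _ => hz i)⟩

theorem Matrix.posSemidef_diagonal_conj_iff {n R : Type*} [Fintype n] [DecidableEq n] [CommRing R]
    [PartialOrder R] [StarRing R] [TrivialStar R] {d : n → R} (hd : ∀ i, IsUnit (d i))
    {M : Matrix n n R} : (Matrix.of fun a b => d a * M a b * d b).PosSemidef ↔ M.PosSemidef := by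
  have hD : IsUnit (Matrix.diagonal d) := Matrix.isUnit_diagonal.2 (Pi.isUnit_iff.2 hd)
  rw [← Matrix.IsUnit.posSemidef_star_right_conjugate_iff (x := M) hD]
  congr!
  ext a b
  simp [Matrix.star_eq_conjTranspose]

variable [DecidableEq ι]

theorem fderiv_prod_apply_single (S : Finset ι) (y : ι → ℝ) (b : ι) :
    fderiv ℝ (fun y : ι → ℝ => ∏ i ∈ S, y i) y (Pi.single b 1) =
      if b ∈ S then ∏ j ∈ S.erase b, y j else 0 := by
  rw [(HasFDerivAt.finsetProd fun i _ => hasFDerivAt_apply i y).fderiv]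
  simp [Pi.single_apply]

theorem fderiv_sum_mul_prod_apply_single {κ : Type*} (K : Finset κ) (c : κ → ℝ)
    (s : κ → Finset ι) (y : ι → ℝ) (b : ι) :
    fderiv ℝ (fun y : ι → ℝ => ∑ k ∈ K, c k * ∏ i ∈ s k, y i) y (Pi.single b 1) =
      ∑ k ∈ K with b ∈ s k, c k * ∏ j ∈ (s k).erase b, y j := by
  rw [fderiv_fun_sum fun k _ => by fun_prop, Finset.sum_filter, sum_apply]
  refine Finset.sum_congr rfl fun k _ => ?_
  rw [fderiv_const_mul (by fun_prop), smul_apply, fderiv_prod_apply_single, smul_eq_mul, mul_ite,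
    mul_zero]

theorem mul_fderiv_sum_mul_prod_apply_single {κ : Type*} (K : Finset κ) (c : κ → ℝ)
    (s : κ → Finset ι) (y : ι → ℝ) (b : ι) :
    y b * fderiv ℝ (fun y : ι → ℝ => ∑ k ∈ K, c k * ∏ i ∈ s k, y i) y (Pi.single b 1) =
      ∑ k ∈ K with b ∈ s k, c k * ∏ j ∈ s k, y j := by
  rw [fderiv_sum_mul_prod_apply_single, Finset.mul_sum]
  refine Finset.sum_congr rfl fun k hk => ?_
  rw [mul_left_comm, Finset.mul_prod_erase _ _ (Finset.mem_filter.1 hk).2]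

theorem mul_mul_fderiv_fderiv_sum_mul_prod_apply_single {κ : Type*} (K : Finset κ)
    (c : κ → ℝ) (s : κ → Finset ι) (y : ι → ℝ) (a b : ι) :
    y a * y b * fderiv ℝ (fun y => fderiv ℝ (fun y : ι → ℝ => ∑ k ∈ K, c k * ∏ i ∈ s k, y i) y
        (Pi.single b 1)) y (Pi.single a 1) =
      ∑ k ∈ K with b ∈ s k ∧ a ∈ (s k).erase b, c k * ∏ j ∈ s k, y j := by
  have hfirst : (fun y => fderiv ℝ (fun y : ι → ℝ => ∑ k ∈ K, c k * ∏ i ∈ s k, y i) y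
      (Pi.single b 1)) = fun y => ∑ k ∈ K with b ∈ s k, c k * ∏ j ∈ (s k).erase b, y j :=
    funext fun y => fderiv_sum_mul_prod_apply_single K c s y b
  rw [mul_comm (y a), mul_assoc, hfirst, mul_fderiv_sum_mul_prod_apply_single,
    Finset.filter_filter, Finset.mul_sum]
  refine Finset.sum_congr rfl fun k hk => ?_
  rw [mul_left_comm, Finset.mul_prod_erase _ _ (Finset.mem_filter.1 hk).2.1]

noncomputable def tiltedMean (μ : Finset ι → ℝ) (z : ι → ℝ) (a : ι) : ℝ :=
  (∑ S, if a ∈ S then μ S * ∏ i ∈ S, z i else 0) / genPoly μ z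

noncomputable def tiltedCov (μ : Finset ι → ℝ) (z : ι → ℝ) (a b : ι) : ℝ :=
  (∑ S, if a ∈ S ∧ b ∈ S then μ S * ∏ i ∈ S, z i else 0) / genPoly μ z
    - tiltedMean μ z a * tiltedMean μ z b

theorem fderiv_fderiv_log_genPoly_apply_single {μ : Finset ι → ℝ} {z : ι → ℝ}
    (hz : ∀ i, z i ≠ 0) (hg : genPoly μ z ≠ 0) (a b : ι) :
    fderiv ℝ (fun y => fderiv ℝ (fun w => log (genPoly μ w)) y (Pi.single b 1)) z (Pi.single a 1)
      = (tiltedCov μ z a b - if a = b then tiltedMean μ z a else 0) / (z a * z b) := by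
  have hfa := mul_fderiv_sum_mul_prod_apply_single Finset.univ μ id z a
  have hfb := mul_fderiv_sum_mul_prod_apply_single Finset.univ μ id z b
  have hfab := mul_mul_fderiv_fderiv_sum_mul_prod_apply_single Finset.univ μ id z a b
  simp only [id, Finset.sum_filter] at hfa hfb hfab
  rw [fderiv_fderiv_log_apply (by unfold genPoly; fun_prop) hg]
  unfold tiltedCov tiltedMean genPoly at *
  rw [eq_div_of_mul_eq (hz a) ((mul_comm _ _).trans hfa),
    eq_div_of_mul_eq (hz b) ((mul_comm _ _).trans hfb),
    eq_div_of_mul_eq (mul_ne_zero (hz a) (hz b)) ((mul_comm _ _).trans hfab)]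
  by_cases hab : a = b
  · subst hab
    simp only [Finset.mem_erase, ne_eq, not_true_eq_false, false_and, and_false, ↓reduceIte,
      Finset.sum_const_zero, zero_div, zero_sub, and_self, sub_sub_cancel_left]
    field_simp
  · simp only [Finset.mem_erase, ne_eq, hab, not_false_eq_true, true_and, and_comm, ↓reduceIte,
      sub_zero]
    field_simp

theorem neg_hessian_log_genPoly_posSemidef_iff {μ : Finset ι → ℝ} {z : ι → ℝ}
    (hz : ∀ i, z i ≠ 0) (hg : genPoly μ z ≠ 0) :
    (Matrix.of fun a b => -fderiv ℝ (fun y => fderiv ℝ (fun w => log (genPoly μ w)) y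
        (Pi.single b 1)) z (Pi.single a 1)).PosSemidef ↔
      (Matrix.of fun a b =>
        (if a = b then tiltedMean μ z a else 0) - tiltedCov μ z a b).PosSemidef := by
  refine (Eq.to_iff ?_).trans
    (Matrix.posSemidef_diagonal_conj_iff fun i => (inv_ne_zero (hz i)).isUnit)
  congr 1
  ext a b
  rw [Matrix.of_apply, Matrix.of_apply, fderiv_fderiv_log_genPoly_apply_single hz hg,
    Matrix.of_apply]
  field_simp
  ring

/-- For a distribution `μ` on `{0,1}^n` with generating polynomial
`g(z) = Σ_S μ(S) ∏_{i∈S} z_i`, at any `z ∈ ℝⁿ_{>0}` the Hessian of `log g` equals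
`diag(z)⁻¹ (Cov(z*μ) - diag(m(z*μ))) diag(z)⁻¹`; in particular `log g` is concave at `z`
(its Hessian is negative semidefinite) iff `Cov(z*μ) ⪯ diag(m(z*μ))`. -/
theorem stmt16 {n : ℕ} (μ : Finset (Fin n) → ℝ)
    (hnonneg : ∀ S, 0 ≤ μ S) (hsum : ∑ S : Finset (Fin n), μ S = 1)
    (g : (Fin n → ℝ) → ℝ)
    (hg : g = fun z => ∑ S : Finset (Fin n), μ S * ∏ i ∈ S, z i)
    (m : (Fin n → ℝ) → Fin n → ℝ)
    (hm : m = fun z a =>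
      (∑ S : Finset (Fin n), (if a ∈ S then μ S * ∏ i ∈ S, z i else 0)) / g z)
    (C : (Fin n → ℝ) → Fin n → Fin n → ℝ)
    (hC : C = fun z a b =>
      (∑ S : Finset (Fin n), (if a ∈ S ∧ b ∈ S then μ S * ∏ i ∈ S, z i else 0)) / g z
        - m z a * m z b)
    (z : Fin n → ℝ) (hz : ∀ i, 0 < z i) :
    (∀ a b : Fin n,
      fderiv ℝ (fun y => fderiv ℝ (fun w => Real.log (g w)) y (Pi.single b 1)) z
          (Pi.single a 1)
        = (C z a b - (if a = b then m z a else 0)) / (z a * z b)) ∧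
    ((Matrix.of (fun a b : Fin n =>
        - fderiv ℝ (fun y => fderiv ℝ (fun w => Real.log (g w)) y (Pi.single b 1)) z
            (Pi.single a 1))).PosSemidef ↔
      (Matrix.of (fun a b : Fin n =>
        (if a = b then m z a else 0) - C z a b)).PosSemidef) := by
  subst hg hm hC
  have hg : genPoly μ z ≠ 0 := (genPoly_pos hnonneg (by simp [hsum]) hz).ne'
  have hz : ∀ i, z i ≠ 0 := fun i => (hz i).ne'
  exact ⟨fderiv_fderiv_log_genPoly_apply_single hz hg,
    neg_hessian_log_genPoly_posSemidef_iff hz hg⟩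
end

section
/- Let μ be a distribution fully supported on a downward closed family X ⊆ {0,1}^n, and fix a non-maximal S ∈ X. As λ → 0⁺, the following asymptotic expansion holds: Cov(λ*μ^S) - diag(m(λ*μ^S)) = λ²·diag(r_S)(M_S - I)diag(r_S) + o(λ²), and m(λ*μ^S)_i = λ·r_S(i) + o(λ) for i ∈ V_S. Consequently, if M_S ⪯ I + (1-δ)diag(r_S)^{-1}, then for sufficiently small λ > 0, Cov(λ*μ^S) ⪯ (1 + (1-δ)λ + o(λ))·diag(m(λ*μ^S)). -/
/-!
Only the lowest-order term of each pinned sum matters as `λ → 0`: the partition function is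
`μ(S) + O(λ)`, the sum over `T ∋ i` is `μ(S ∪ {i}) λ + O(λ²)` and the sum over `T ∋ i, j` is
`μ(S ∪ {i, j}) λ² + O(λ³)`; dividing by the partition function gives both expansions.
For the spectral bound take `e(λ) = λ^{3/2}`. With `D = diag(r_S)` and
`H = I + (1 - δ) D⁻¹ - M_S ⪰ 0`, the matrix `(1 + (1 - δ)λ + e)·diag(m) - Cov` equals
`λ² D H D + λ^{5/2} D + G` with `G = O(λ³)` entrywise, and for small `λ` the diagonal
`λ^{5/2} D` dominates `G`.
-/

open Topology Asymptotics Matrix Filter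

namespace Asymptotics

variable {𝕜 : Type*} [NormedField 𝕜]

theorem isBigO_pow_pow_nhds_zero {m n : ℕ} (h : m ≤ n) :
    (fun x : 𝕜 => x ^ n) =O[𝓝 0] fun x => x ^ m := by
  rcases h.lt_or_eq with h | rfl
  · exact (isLittleO_pow_pow h).isBigO
  · exact isBigO_refl _ _

theorem IsBigO.div_sub_div_mul_pow {f g : 𝕜 → 𝕜} {a c : 𝕜} (hc : c ≠ 0) {k : ℕ}
    (hf : (fun x => f x - a * x ^ k) =O[𝓝 0] fun x => x ^ (k + 1))
    (hg : (fun x => g x - c) =O[𝓝 0] fun x => x) :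
    (fun x => f x / g x - a / c * x ^ k) =O[𝓝 0] fun x => x ^ (k + 1) := by
  have hg_lim : Tendsto g (𝓝 0) (𝓝 c) := by
    simpa using (hg.trans_tendsto tendsto_id).add_const c
  have hinv : (fun x => (g x)⁻¹) =O[𝓝 0] fun _ => (1 : 𝕜) :=
    (hg_lim.inv₀ hc).isBigO_one 𝕜
  have hnum : (fun x => f x - a * x ^ k - a / c * x ^ k * (g x - c)) =O[𝓝 0]
      fun x => x ^ (k + 1) := by
    refine hf.sub ?_
    simpa [pow_succ, mul_assoc] using
      ((isBigO_refl (fun x : 𝕜 => x ^ k) _).mul hg).const_mul_left (a / c)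
  refine (hinv.mul hnum).congr' ((hg_lim.eventually_ne hc).mono fun x hx => ?_) (by simp)
  field_simp
  ring

theorem IsBigO.mul_sub_mul_sq {f g : 𝕜 → 𝕜} {a b : 𝕜}
    (hf : (fun x => f x - a * x) =O[𝓝 0] fun x => x ^ 2)
    (hg : (fun x => g x - b * x) =O[𝓝 0] fun x => x ^ 2) :
    (fun x => f x * g x - a * b * x ^ 2) =O[𝓝 0] fun x => x ^ 3 := by
  have hg_lin : g =O[𝓝 0] fun x => x := by
    have hsq : (fun x : 𝕜 => x ^ 2) =O[𝓝 0] fun x => x := by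
      simpa using isBigO_pow_pow_nhds_zero (𝕜 := 𝕜) (m := 1) (n := 2) (by norm_num)
    simpa using (hg.trans hsq).add ((isBigO_refl (fun x : 𝕜 => x) _).const_mul_left b)
  have hsplit : (fun x => f x * g x - a * b * x ^ 2)
      = fun x => (f x - a * x) * g x + a * (x * (g x - b * x)) := by
    funext x; ring
  rw [hsplit]
  refine IsBigO.add ?_ ?_
  · simpa [pow_succ] using hf.mul hg_lin
  · simpa [pow_succ, mul_comm] using
      ((isBigO_refl (fun x : 𝕜 => x) _).mul hg).const_mul_left a

theorem IsBigO.isLittleO_pow_nhdsGT {f : ℝ → ℝ} {k : ℕ}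
    (h : f =O[𝓝 0] fun x => x ^ (k + 1)) : f =o[𝓝[>] 0] fun x => x ^ k :=
  (h.trans_isLittleO (isLittleO_pow_pow k.lt_succ_self)).mono nhdsWithin_le_nhds

end Asymptotics

section PowerSums

variable {𝕜 : Type*} [NormedField 𝕜]

theorem sum_mul_pow_sub_isBigO {ι : Type*} [DecidableEq ι] (s : Finset ι) (a : ι → 𝕜)
    (d : ι → ℕ) {t : ι} (ht : t ∈ s) (hd : ∀ i ∈ s, i ≠ t → d t < d i) :
    (fun x : 𝕜 => ∑ i ∈ s, a i * x ^ d i - a t * x ^ d t) =O[𝓝 0]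
      fun x => x ^ (d t + 1) := by
  simp_rw [← Finset.add_sum_erase s _ ht, add_sub_cancel_left]
  refine IsBigO.fun_sum fun i hi => ?_
  obtain ⟨hit, his⟩ := Finset.mem_erase.1 hi
  exact (isBigO_pow_pow_nhds_zero (hd i his hit)).const_mul_left (a i)

theorem sum_superset_mul_pow_sub_isBigO {α : Type*} [Fintype α] [DecidableEq α]
    (μ : Finset α → 𝕜) (S : Finset α) {t : Finset α} (ht : t ⊆ Sᶜ) :
    (fun l : 𝕜 => ∑ T ∈ Sᶜ.powerset, (if t ⊆ T then μ (S ∪ T) * l ^ T.card else 0)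
      - μ (S ∪ t) * l ^ t.card) =O[𝓝 0] fun l => l ^ (t.card + 1) := by
  simp_rw [← Finset.sum_filter]
  refine sum_mul_pow_sub_isBigO _ (fun T => μ (S ∪ T)) Finset.card
    (Finset.mem_filter.2 ⟨Finset.mem_powerset.2 ht, subset_rfl⟩) fun T hT hTt => ?_
  exact Finset.card_lt_card ((Finset.mem_filter.1 hT).2.ssubset_of_ne (Ne.symm hTt))

end PowerSums

noncomputable section Pinned

variable {α : Type*} [Fintype α] [DecidableEq α] (μ : Finset α → ℝ) (S : Finset α)

/- `pinnedMean μ S λ`, `pinnedCov μ S λ`, `linkRatio μ S` and `linkInfluence μ S` are the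
paper's `m(λ*μ^S)`, `Cov(λ*μ^S)`, `r_S` and `M_S`; sums run over `T ⊆ Sᶜ`, standing for `S ∪ T`. -/

def pinnedPartition (l : ℝ) : ℝ :=
  ∑ T ∈ Sᶜ.powerset, μ (S ∪ T) * l ^ T.card

def pinnedMean (l : ℝ) (i : α) : ℝ :=
  (∑ T ∈ Sᶜ.powerset, if i ∈ T then μ (S ∪ T) * l ^ T.card else 0) / pinnedPartition μ S l

def pinnedCov (l : ℝ) (i j : α) : ℝ :=
  (∑ T ∈ Sᶜ.powerset, if i ∈ T ∧ j ∈ T then μ (S ∪ T) * l ^ T.card else 0)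
    / pinnedPartition μ S l - pinnedMean μ S l i * pinnedMean μ S l j

def linkRatio (i : α) : ℝ :=
  μ (insert i S) / μ S

def linkInfluence (i j : α) : ℝ :=
  if i = j then 0
  else μ (insert i (insert j S)) * μ S / (μ (insert i S) * μ (insert j S)) - 1

theorem pinnedCov_comm (l : ℝ) (i j : α) : pinnedCov μ S l i j = pinnedCov μ S l j i := by
  simp only [pinnedCov, and_comm, mul_comm]

theorem pinnedCov_self (l : ℝ) (i : α) :
    pinnedCov μ S l i i = pinnedMean μ S l i - pinnedMean μ S l i * pinnedMean μ S l i := by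
  simp only [pinnedCov, pinnedMean, and_self]

theorem pinnedPartition_sub_isBigO :
    (fun l => pinnedPartition μ S l - μ S) =O[𝓝 0] fun l => l := by
  simpa [pinnedPartition] using sum_superset_mul_pow_sub_isBigO μ S (Finset.empty_subset _)

variable {μ S}

theorem pinnedMean_sub_isBigO (hS : μ S ≠ 0) {i : α} (hi : i ∉ S) :
    (fun l => pinnedMean μ S l i - linkRatio μ S i * l) =O[𝓝 0] fun l => l ^ 2 := by
  have := (sum_superset_mul_pow_sub_isBigO μ S (t := {i}) (by simpa using hi)).div_sub_div_mul_pow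
    hS (pinnedPartition_sub_isBigO μ S)
  simpa [pinnedMean, linkRatio, Finset.union_comm S, ← Finset.insert_eq] using this

theorem pinnedCov_sub_isBigO (hS : μ S ≠ 0) {i j : α} (hi : i ∉ S) (hj : j ∉ S)
    (hSi : μ (insert i S) ≠ 0) (hSj : μ (insert j S) ≠ 0) :
    (fun l => pinnedCov μ S l i j - (if i = j then pinnedMean μ S l i else 0)
      - l ^ 2 * (linkRatio μ S i * (linkInfluence μ S i j - if i = j then 1 else 0)
        * linkRatio μ S j)) =O[𝓝 0] fun l => l ^ 3 := by
  have hprod := (pinnedMean_sub_isBigO hS hi).mul_sub_mul_sq (pinnedMean_sub_isBigO hS hj)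
  by_cases hij : i = j
  · subst hij
    refine hprod.neg_left.congr_left fun l => ?_
    simp only [pinnedCov_self, linkInfluence, if_true]
    ring
  have hpair := (sum_superset_mul_pow_sub_isBigO μ S (t := {i, j})
    (by simp [Finset.insert_subset_iff, hi, hj])).div_sub_div_mul_pow hS
      (pinnedPartition_sub_isBigO μ S)
  rw [Finset.card_pair hij] at hpair
  refine (hpair.sub hprod).congr_left fun l => ?_
  have hunion : S ∪ {i, j} = insert i (insert j S) := by
    rw [Finset.union_insert, Finset.union_comm, ← Finset.insert_eq]
  simp only [pinnedCov, linkInfluence, linkRatio, if_neg hij, Finset.insert_subset_iff,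
    Finset.singleton_subset_iff, hunion]
  field_simp
  ring

end Pinned

theorem Matrix.posSemidef_diagonal_add_of_sum_abs_le {ι : Type*} [Fintype ι] [DecidableEq ι]
    {d : ι → ℝ} {F : Matrix ι ι ℝ} (hF : F.IsHermitian) (hd : ∀ i, ∑ j, |F i j| ≤ d i) :
    (diagonal d + F).PosSemidef := by
  refine posSemidef_iff_dotProduct_mulVec.2 ⟨(isHermitian_diagonal d).add hF, fun x => ?_⟩
  have hFsymm : ∀ i j, F j i = F i j := fun i j => by simpa using congrFun (congrFun hF i) j
  have hterm : ∀ i j, -(|F i j| * (x i ^ 2 + x j ^ 2) / 2) ≤ x i * F i j * x j := by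
    intro i j
    have hxx : |x i * x j| ≤ (x i ^ 2 + x j ^ 2) / 2 := by
      rw [abs_mul]
      nlinarith [sq_nonneg (|x i| - |x j|), sq_abs (x i), sq_abs (x j)]
    have habs : |x i * F i j * x j| = |F i j| * |x i * x j| := by
      rw [abs_mul, abs_mul, abs_mul]; ring
    have := neg_abs_le (x i * F i j * x j)
    nlinarith [mul_le_mul_of_nonneg_left hxx (abs_nonneg (F i j))]
  have hsym_sum : ∑ i, ∑ j, |F i j| * x j ^ 2 = ∑ i, ∑ j, |F i j| * x i ^ 2 := by
    rw [Finset.sum_comm]; simp_rw [hFsymm]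
  have hlower : -∑ i, d i * x i ^ 2 ≤ ∑ i, ∑ j, x i * F i j * x j := by
    calc -∑ i, d i * x i ^ 2 ≤ -∑ i, (∑ j, |F i j|) * x i ^ 2 := by
          gcongr with i; exact hd i
      _ = ∑ i, ∑ j, -(|F i j| * (x i ^ 2 + x j ^ 2) / 2) := by
          have hsplit : ∀ i j, -(|F i j| * (x i ^ 2 + x j ^ 2) / 2)
              = -(|F i j| * x i ^ 2) / 2 - |F i j| * x j ^ 2 / 2 := fun i j => by ring
          simp_rw [hsplit, Finset.sum_sub_distrib, ← Finset.sum_div, Finset.sum_neg_distrib,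
            hsym_sum, Finset.sum_mul]
          ring
      _ ≤ _ := Finset.sum_le_sum fun i _ => Finset.sum_le_sum fun j _ => hterm i j
  have hquad : star x ⬝ᵥ (diagonal d + F) *ᵥ x
      = ∑ i, d i * x i ^ 2 + ∑ i, ∑ j, x i * F i j * x j := by
    rw [add_mulVec, dotProduct_add, star_trivial, funext (mulVec_diagonal d x)]
    simp only [dotProduct, mulVec, Finset.mul_sum]
    congr 1
    · exact Finset.sum_congr rfl fun i _ => by ring
    · exact Finset.sum_congr rfl fun i _ => Finset.sum_congr rfl fun j _ => by ring
  rw [hquad]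
  linarith

theorem Matrix.eventually_posSemidef_diagonal_add_of_isLittleO {α ι : Type*} [Fintype ι]
    [DecidableEq ι] {F : Filter α} {G : α → Matrix ι ι ℝ} {r : ι → ℝ} {w : α → ℝ}
    (hG : ∀ x, (G x).IsHermitian) (hr : ∀ i, 0 < r i) (hw : ∀ x, 0 ≤ w x)
    (hsmall : ∀ i, (fun x => ∑ j, |G x i j|) =o[F] w) :
    ∀ᶠ x in F, (diagonal (fun i => w x * r i) + G x).PosSemidef := by
  have hdom : ∀ᶠ x in F, ∀ i, ∑ j, |G x i j| ≤ w x * r i := by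
    refine eventually_all.2 fun i => ((hsmall i).bound (hr i)).mono fun x hx => ?_
    rw [Real.norm_of_nonneg (Finset.sum_nonneg fun j _ => abs_nonneg _),
      Real.norm_of_nonneg (hw x)] at hx
    linarith
  exact hdom.mono fun x hx => posSemidef_diagonal_add_of_sum_abs_le (hG x) hx

theorem sqrt_isLittleO_one_nhdsGT : Real.sqrt =o[𝓝[>] 0] fun _ => (1 : ℝ) :=
  (isLittleO_one_iff ℝ).2 <| by
    simpa using (Real.continuous_sqrt.tendsto 0).mono_left nhdsWithin_le_nhds

theorem mul_sqrt_isLittleO_self : (fun x : ℝ => x * Real.sqrt x) =o[𝓝[>] 0] fun x => x := by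
  simpa using (isBigO_refl (fun x : ℝ => x) _).mul_isLittleO sqrt_isLittleO_one_nhdsGT

theorem pow_three_isLittleO_sq_mul_sqrt :
    (fun x : ℝ => x ^ 3) =o[𝓝[>] 0] fun x => x ^ 2 * Real.sqrt x := by
  refine ((isBigO_refl (fun x : ℝ => x ^ 2 * Real.sqrt x) _).mul_isLittleO
    (sqrt_isLittleO_one_nhdsGT)).congr' ?_ (by simp)
  filter_upwards [self_mem_nhdsWithin] with x (hx : 0 < x)
  rw [mul_assoc, Real.mul_self_sqrt hx.le]
  ring

theorem eventually_posSemidef_of_cov_expansion {ι : Type*} [Fintype ι] [DecidableEq ι]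
    {m : ℝ → ι → ℝ} {C : ℝ → ι → ι → ℝ} {r : ι → ℝ} {K : ι → ι → ℝ} {δ : ℝ}
    (hr : ∀ i, 0 < r i) (hC : ∀ l i j, C l i j = C l j i)
    (hm : ∀ i, (fun l => m l i - r i * l) =O[𝓝 0] fun l => l ^ 2)
    (hE : ∀ i j, (fun l => C l i j - (if i = j then m l i else 0)
        - l ^ 2 * (r i * (K i j - (if i = j then 1 else 0)) * r j)) =O[𝓝 0] fun l => l ^ 3)
    (hH : (of fun i j => (if i = j then 1 + (1 - δ) / r i else 0) - K i j).PosSemidef) :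
    ∃ e : ℝ → ℝ, (e =o[𝓝[>] 0] fun l => l) ∧ ∀ᶠ l in 𝓝[>] 0,
      (of fun i j => (1 + (1 - δ) * l + e l) * (if i = j then m l i else 0)
        - C l i j).PosSemidef := by
  set H := of fun i j => (if i = j then 1 + (1 - δ) / r i else 0) - K i j
  set D : Matrix ι ι ℝ := diagonal r
  set A : ℝ → Matrix ι ι ℝ := fun l => of fun i j =>
    (1 + (1 - δ) * l + l * Real.sqrt l) * (if i = j then m l i else 0) - C l i j
  set G : ℝ → Matrix ι ι ℝ := fun l =>
    A l - (l ^ 2 • (Dᴴ * H * D) + diagonal fun i => l ^ 2 * Real.sqrt l * r i)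
  have hA : ∀ l, (A l).IsHermitian := fun l => IsHermitian.ext fun i j => by
    by_cases hij : i = j
    · subst hij; rfl
    · simp [A, hij, Ne.symm hij, hC l i j]
  have hG_herm : ∀ l, (G l).IsHermitian := fun l =>
    (hA l).sub ((((hH.conjTranspose_mul_mul_same D).smul (sq_nonneg l)).isHermitian).add
      (isHermitian_diagonal _))
  have hG_apply : ∀ l i j, G l i j = (if i = j then ((1 - δ) * l + l * Real.sqrt l) *
      (m l i - r i * l) else 0) - (C l i j - (if i = j then m l i else 0)
        - l ^ 2 * (r i * (K i j - (if i = j then 1 else 0)) * r j)) := by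
    intro l i j
    simp only [G, A, H, D, diagonal_conjTranspose, star_trivial, Matrix.sub_apply,
      Matrix.add_apply, Matrix.smul_apply, diagonal_mul, mul_diagonal, of_apply, diagonal_apply,
      smul_eq_mul]
    split_ifs with hij
    · subst hij
      field_simp [(hr i).ne']
      ring
    · ring
  have hcross : ∀ i, (fun l => ((1 - δ) * l + l * Real.sqrt l) * (m l i - r i * l))
      =O[𝓝[>] 0] fun l => l ^ 3 := by
    intro i
    have hcoef : (fun l => (1 - δ) * l + l * Real.sqrt l) =O[𝓝[>] 0] fun l => l :=
      ((isBigO_refl _ _).const_mul_left (1 - δ)).add mul_sqrt_isLittleO_self.isBigO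
    simpa [← pow_succ'] using hcoef.mul ((hm i).mono nhdsWithin_le_nhds)
  have hG_small : ∀ i, (fun l => ∑ j, |G l i j|) =o[𝓝[>] 0] fun l => l ^ 2 * Real.sqrt l := by
    intro i
    refine IsBigO.trans_isLittleO (IsBigO.fun_sum fun j _ => ?_) pow_three_isLittleO_sq_mul_sqrt
    simp_rw [hG_apply, isBigO_abs_left]
    refine IsBigO.sub ?_ ((hE i j).mono nhdsWithin_le_nhds)
    by_cases hij : i = j
    · simpa [hij] using hcross j
    · simpa [hij] using isBigO_zero _ _
  refine ⟨fun l => l * Real.sqrt l, mul_sqrt_isLittleO_self, ?_⟩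
  filter_upwards [eventually_posSemidef_diagonal_add_of_isLittleO hG_herm hr
    (fun l => by positivity) hG_small] with l hl
  have hsplit : A l = l ^ 2 • (Dᴴ * H * D)
      + (diagonal (fun i => l ^ 2 * Real.sqrt l * r i) + G l) := by
    simp only [G]; abel
  show (A l).PosSemidef
  rw [hsplit]
  exact ((hH.conjTranspose_mul_mul_same D).smul (sq_nonneg l)).add hl

theorem stmt17_general {n : ℕ} (X : Finset (Finset (Fin n)))
    (μ : Finset (Fin n) → ℝ)
    (hsupp : ∀ S, 0 < μ S ↔ S ∈ X)
    (S : Finset (Fin n)) (hS : S ∈ X)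
    (Z : ℝ → ℝ) (hZ : Z = fun l => ∑ T ∈ Sᶜ.powerset, μ (S ∪ T) * l ^ T.card)
    (m : ℝ → Fin n → ℝ)
    (hm : m = fun l i =>
      (∑ T ∈ Sᶜ.powerset, (if i ∈ T then μ (S ∪ T) * l ^ T.card else 0)) / Z l)
    (Cov : ℝ → Fin n → Fin n → ℝ)
    (hCov : Cov = fun l i j =>
      (∑ T ∈ Sᶜ.powerset, (if i ∈ T ∧ j ∈ T then μ (S ∪ T) * l ^ T.card else 0)) / Z l
        - m l i * m l j)
    (r : Fin n → ℝ) (hr : r = fun i => μ (insert i S) / μ S)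
    (M : Fin n → Fin n → ℝ)
    (hM : M = fun i j => if i = j then 0
      else μ (insert i (insert j S)) * μ S / (μ (insert i S) * μ (insert j S)) - 1)
    (δ : ℝ) :
    (∀ i : {a : Fin n // a ∉ S ∧ insert a S ∈ X},
      (fun l : ℝ => m l i.1 - l * r i.1) =o[𝓝[>] (0 : ℝ)] fun l => l) ∧
    (∀ i j : {a : Fin n // a ∉ S ∧ insert a S ∈ X},
      (fun l : ℝ => Cov l i.1 j.1 - (if i = j then m l i.1 else 0)
          - l ^ 2 * (r i.1 * (M i.1 j.1 - (if i = j then 1 else 0)) * r j.1))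
        =o[𝓝[>] (0 : ℝ)] fun l => l ^ 2) ∧
    ((Matrix.of (fun i j : {a : Fin n // a ∉ S ∧ insert a S ∈ X} =>
        (if i = j then 1 + (1 - δ) / r i.1 else 0) - M i.1 j.1)).PosSemidef →
      ∃ e : ℝ → ℝ, (e =o[𝓝[>] (0 : ℝ)] fun l => l) ∧
        ∀ᶠ l in 𝓝[>] (0 : ℝ),
          (Matrix.of (fun i j : {a : Fin n // a ∉ S ∧ insert a S ∈ X} =>
            (1 + (1 - δ) * l + e l) * (if i = j then m l i.1 else 0)
              - Cov l i.1 j.1)).PosSemidef) := by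
  subst hZ
  obtain rfl : m = pinnedMean μ S := hm
  obtain rfl : Cov = pinnedCov μ S := hCov
  obtain rfl : r = linkRatio μ S := hr
  obtain rfl : M = linkInfluence μ S := hM
  have hμS : 0 < μ S := (hsupp S).2 hS
  have hμ : ∀ i : {a : Fin n // a ∉ S ∧ insert a S ∈ X}, 0 < μ (insert i.1 S) :=
    fun i => (hsupp _).2 i.2.2
  have hm_exp := fun i : {a : Fin n // a ∉ S ∧ insert a S ∈ X} =>
    pinnedMean_sub_isBigO hμS.ne' i.2.1
  have hCov_exp : ∀ i j : {a : Fin n // a ∉ S ∧ insert a S ∈ X},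
      (fun l => pinnedCov μ S l i.1 j.1 - (if i = j then pinnedMean μ S l i.1 else 0)
        - l ^ 2 * (linkRatio μ S i.1 * (linkInfluence μ S i.1 j.1 - if i = j then 1 else 0)
          * linkRatio μ S j.1)) =O[𝓝 0] fun l => l ^ 3 := fun i j => by
    simpa only [Subtype.coe_inj] using
      pinnedCov_sub_isBigO hμS.ne' i.2.1 j.2.1 (hμ i).ne' (hμ j).ne'
  refine ⟨fun i => ?_, fun i j => (hCov_exp i j).isLittleO_pow_nhdsGT, fun hH => ?_⟩
  · simpa [mul_comm] using (hm_exp i).isLittleO_pow_nhdsGT (k := 1)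
  · exact eventually_posSemidef_of_cov_expansion (fun i => div_pos (hμ i) hμS)
      (fun l i j => pinnedCov_comm μ S l i.1 j.1) hm_exp hCov_exp hH

/-- Small-fugacity expansion: for a distribution `μ` fully supported on a downward closed
family `X` and a non-maximal `S ∈ X`, as `λ → 0⁺`,
`m(λ*μ^S)_i = λ·r_S(i) + o(λ)` and
`Cov(λ*μ^S) - diag(m(λ*μ^S)) = λ²·diag(r_S)(M_S - I)diag(r_S) + o(λ²)` entrywise on `V_S`;
consequently, if `M_S ⪯ I + (1-δ)·diag(r_S)⁻¹`, then for sufficiently small `λ > 0`,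
`Cov(λ*μ^S) ⪯ (1 + (1-δ)λ + o(λ))·diag(m(λ*μ^S))`. -/
theorem stmt17 {n : ℕ} (X : Finset (Finset (Fin n))) (hX : X.Nonempty)
    (hdc : ∀ S T : Finset (Fin n), T ∈ X → S ⊆ T → S ∈ X)
    (μ : Finset (Fin n) → ℝ)
    (hsupp : ∀ S, 0 < μ S ↔ S ∈ X) (hzero : ∀ S, S ∉ X → μ S = 0)
    (S : Finset (Fin n)) (hS : S ∈ X) (hnonmax : ∃ i ∉ S, insert i S ∈ X)
    (Z : ℝ → ℝ) (hZ : Z = fun l => ∑ T ∈ Sᶜ.powerset, μ (S ∪ T) * l ^ T.card)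
    (m : ℝ → Fin n → ℝ)
    (hm : m = fun l i =>
      (∑ T ∈ Sᶜ.powerset, (if i ∈ T then μ (S ∪ T) * l ^ T.card else 0)) / Z l)
    (Cov : ℝ → Fin n → Fin n → ℝ)
    (hCov : Cov = fun l i j =>
      (∑ T ∈ Sᶜ.powerset, (if i ∈ T ∧ j ∈ T then μ (S ∪ T) * l ^ T.card else 0)) / Z l
        - m l i * m l j)
    (r : Fin n → ℝ) (hr : r = fun i => μ (insert i S) / μ S)
    (M : Fin n → Fin n → ℝ)
    (hM : M = fun i j => if i = j then 0
      else μ (insert i (insert j S)) * μ S / (μ (insert i S) * μ (insert j S)) - 1)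
    (δ : ℝ) (hδ : δ ∈ Set.Icc (0 : ℝ) 1) :
    (∀ i : {a : Fin n // a ∉ S ∧ insert a S ∈ X},
      (fun l : ℝ => m l i.1 - l * r i.1) =o[𝓝[>] (0 : ℝ)] fun l => l) ∧
    (∀ i j : {a : Fin n // a ∉ S ∧ insert a S ∈ X},
      (fun l : ℝ => Cov l i.1 j.1 - (if i = j then m l i.1 else 0)
          - l ^ 2 * (r i.1 * (M i.1 j.1 - (if i = j then 1 else 0)) * r j.1))
        =o[𝓝[>] (0 : ℝ)] fun l => l ^ 2) ∧
    ((Matrix.of (fun i j : {a : Fin n // a ∉ S ∧ insert a S ∈ X} =>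
        (if i = j then 1 + (1 - δ) / r i.1 else 0) - M i.1 j.1)).PosSemidef →
      ∃ e : ℝ → ℝ, (e =o[𝓝[>] (0 : ℝ)] fun l => l) ∧
        ∀ᶠ l in 𝓝[>] (0 : ℝ),
          (Matrix.of (fun i j : {a : Fin n // a ∉ S ∧ insert a S ∈ X} =>
            (1 + (1 - δ) * l + e l) * (if i = j then m l i.1 else 0)
              - Cov l i.1 j.1)).PosSemidef) :=
  stmt17_general X μ hsupp S hS Z hZ m hm Cov hCov r hr M hM δ
end

section
/- Consider the antiferromagnetic two-spin system with parameters (β, γ, λ), βγ < 1, γ > 0, on a Δ-regular graph G. For a feasible configuration S, the pairwise dependency matrix satisfies M_S = (βγ - 1)·A_{G,S} + 0-diagonal adjustment, and its maximum eigenvalue obeys λ_max(M_S) ≤ (1 - βγ)·λ*, where -λ* = λ_min(A_G) and A_{G,S} is the adjacency matrix of the induced subgraph on the unpinned-feasible vertices; moreover the marginal ratio satisfies r_S(i) = λ(βγ)^{d_i^S}/γ^Δ ≤ λ/γ^Δ when βγ ≤ 1, so λ_min(diag(r_S)^{-1}) ≥ γ^Δ/λ. -/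
/-!
On the unpinned vertices `M = (βγ - 1) • A_U`, with `A_U` the principal submatrix of `A_G` on `U`.
Since `A_G - λ_min(A_G) • 1` is positive semidefinite by the spectral theorem, so is its principal
submatrix `A_U + λ* • 1` (this is the interlacing step), and multiplying by `1 - βγ ≥ 0` gives
`(1 - βγ) λ* • 1 - M ⪰ 0`. The ratio bounds only use `0 ≤ βγ ≤ 1`; feasibility (no pinned
neighbour when `β = 0`) keeps `r` positive, so inverting reverses the inequality.
-/

open Matrix Unitary
open scoped ComplexOrder

theorem Matrix.IsHermitian.posSemidef_sub_smul_one {n 𝕜 : Type*} [Fintype n] [DecidableEq n]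
    [RCLike 𝕜] {A : Matrix n n 𝕜} (hA : A.IsHermitian) {μ : ℝ}
    (hμ : ∀ i, μ ≤ hA.eigenvalues i) : (A - μ • (1 : Matrix n n 𝕜)).PosSemidef := by
  have hshift : A - μ • (1 : Matrix n n 𝕜) = conjStarAlgAut 𝕜 _ hA.eigenvectorUnitary
      (diagonal fun i => ((hA.eigenvalues i - μ : ℝ) : 𝕜)) := by
    conv_lhs => rw [hA.spectral_theorem]
    rw [← map_one (conjStarAlgAut 𝕜 _ hA.eigenvectorUnitary), ← algebraMap_smul 𝕜 μ,
      ← map_smul, ← map_sub]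
    congr 1
    ext i j
    rcases eq_or_ne i j with rfl | h <;>
      simp [diagonal_apply_ne, Algebra.algebraMap_eq_smul_one, sub_smul, *]
  rw [hshift, conjStarAlgAut_apply, isUnit_coe.posSemidef_star_right_conjugate_iff,
    posSemidef_diagonal_iff]
  exact fun i => by simpa using hμ i

theorem Matrix.IsHermitian.posSemidef_sub_iInf_eigenvalues_smul_one {n 𝕜 : Type*} [Fintype n]
    [DecidableEq n] [RCLike 𝕜] {A : Matrix n n 𝕜} (hA : A.IsHermitian) :
    (A - (⨅ i, hA.eigenvalues i) • (1 : Matrix n n 𝕜)).PosSemidef :=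
  hA.posSemidef_sub_smul_one fun i => ciInf_le (Finite.bddBelow_range _) i

theorem SimpleGraph.of_ite_adj_eq_smul_adjMatrix_submatrix {V R : Type*} [DecidableEq V]
    [Semiring R] (G : SimpleGraph V) [DecidableRel G.Adj] (U : Set V) (c : R) :
    Matrix.of (fun i j : U => if (i : V) ≠ j ∧ G.Adj i j then c else 0) =
      c • (G.adjMatrix R).submatrix (↑) (↑) := by
  ext i j
  by_cases h : G.Adj i j <;> simp [h, G.ne_of_adj]

theorem stmt18_general {V : Type*} [Fintype V] [DecidableEq V]
    (G : SimpleGraph V) [DecidableRel G.Adj]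
    (Δ : ℕ)
    (β γ lam : ℝ) (hβ : 0 ≤ β) (hγ : 0 < γ) (hanti : β * γ < 1) (hlam : 0 < lam)
    (U : Set V)
    (d : V → ℕ)
    (hfeas : ∀ i : U, β = 0 → d (i : V) = 0)
    (hA : (G.adjMatrix ℝ).IsHermitian)
    (lstar : ℝ) (hlstar : lstar = -(⨅ i, hA.eigenvalues i))
    (M : Matrix U U ℝ)
    (hM : M = Matrix.of (fun i j : U =>
      if (i : V) ≠ (j : V) ∧ G.Adj (i : V) (j : V) then β * γ - 1 else 0))
    (r : U → ℝ) (hr : r = fun i : U => lam * (β * γ) ^ d (i : V) / γ ^ Δ) :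
    (((1 - β * γ) * lstar) • (1 : Matrix U U ℝ) - M).PosSemidef ∧
    (∀ i : U, r i ≤ lam / γ ^ Δ) ∧
    (∀ i : U, γ ^ Δ / lam ≤ (r i)⁻¹) := by
  have hβγ : 0 ≤ β * γ := by positivity
  have hr_le (i : U) : r i ≤ lam / γ ^ Δ := by
    simp only [hr]
    exact div_le_div_of_nonneg_right
      (mul_le_of_le_one_right hlam.le (pow_le_one₀ hβγ hanti.le)) (by positivity)
  have hr_pos (i : U) : 0 < r i := by
    rcases hβ.eq_or_lt with hβ0 | hβpos
    · simp only [hr, hfeas i hβ0.symm, pow_zero, mul_one]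
      positivity
    · rw [hr]
      positivity
  refine ⟨?_, hr_le, fun i => ?_⟩
  · have hpsd : ((1 - β * γ) • ((G.adjMatrix ℝ).submatrix ((↑) : U → V) ((↑) : U → V) -
        (⨅ i, hA.eigenvalues i) • (1 : Matrix U U ℝ))).PosSemidef := by
      rw [← submatrix_one (α := ℝ) ((↑) : U → V) Subtype.val_injective]
      exact (hA.posSemidef_sub_iInf_eigenvalues_smul_one.submatrix _).smul
        (sub_nonneg.mpr hanti.le)
    convert hpsd using 1
    rw [hM, G.of_ite_adj_eq_smul_adjMatrix_submatrix, hlstar]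
    module
  · rw [← inv_div]
    exact inv_anti₀ (hr_pos i) (hr_le i)

/-- Antiferromagnetic two-spin system `(β,γ,λ)` with `βγ < 1` on a `Δ`-regular graph `G`:
for a feasible pinning `S` with unpinned-feasible vertex set `U`, the pairwise dependency
matrix `M` (with `M i j = (βγ)^{1[{i,j}∈E]} - 1` off-diagonal, zero diagonal) satisfies
`λ_max(M) ≤ (1-βγ)·λ*` where `-λ* = λ_min(A_G)`; and the marginal ratios
`r i = λ(βγ)^{d_i^S}/γ^Δ` satisfy `r i ≤ λ/γ^Δ`, so `λ_min(diag(r)⁻¹) ≥ γ^Δ/λ`. -/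
theorem stmt18 {V : Type*} [Fintype V] [DecidableEq V] [Nonempty V]
    (G : SimpleGraph V) [DecidableRel G.Adj]
    (Δ : ℕ) (hreg : G.IsRegularOfDegree Δ)
    (β γ lam : ℝ) (hβ : 0 ≤ β) (hγ : 0 < γ) (hanti : β * γ < 1) (hlam : 0 < lam)
    (S : Finset V) (U : Set V) [DecidablePred (· ∈ U)]
    (d : V → ℕ) (hd : d = fun i => (S.filter (G.Adj i)).card)
    (hfeas : ∀ i : U, β = 0 → d (i : V) = 0)
    (hA : (G.adjMatrix ℝ).IsHermitian)
    (lstar : ℝ) (hlstar : lstar = -(⨅ i, hA.eigenvalues i))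
    (M : Matrix U U ℝ)
    (hM : M = Matrix.of (fun i j : U =>
      if (i : V) ≠ (j : V) ∧ G.Adj (i : V) (j : V) then β * γ - 1 else 0))
    (r : U → ℝ) (hr : r = fun i : U => lam * (β * γ) ^ d (i : V) / γ ^ Δ) :
    (((1 - β * γ) * lstar) • (1 : Matrix U U ℝ) - M).PosSemidef ∧
    (∀ i : U, r i ≤ lam / γ ^ Δ) ∧
    (∀ i : U, γ ^ Δ / lam ≤ (r i)⁻¹) :=
  stmt18_general G Δ β γ lam hβ hγ hanti hlam U d hfeas hA lstar hlstar M hM r hr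
end
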